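/- Let M be a rank-one free module over 𝔖 = W[[u]] with generator t, equipped with a φ-semilinear endomorphism φ_M satisfying φ_M(t) = c·E(u)^r·t for a unit c ∈ 𝔖^× and an Eisenstein polynomial E(u). Suppose β : N → M is a morphism from a Kisin module N of height ≤ r (i.e. 𝔖·φ_N(N) ⊇ E(u)^r N) compatible with the φ-structures, with nonzero image I·t for an ideal I ⊆ 𝔖. Then 𝔖·φ(I) ⊇ I, and hence I = (p^n) for some n ∈ ℕ. -/

import Mathlib

/-!
The height condition and the compatibility of `β` give `E^r·I ⊆ E^r·𝔖φ(I)`, and cancelling the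
nonzero `E^r` gives `I ⊆ 𝔖φ(I)`. Since `φ(p) = p`, dividing `I` by a power of `p` preserves this
stability, so one may assume `I ⊄ (p)`. If such an `I` were proper, it would lie in the maximal ideal
`(p, u)`, and `φ(u) = u^p` would push it into `(p, u^j)` for every `j`, hence into `(p)`.
-/

open PowerSeries

namespace PowerSeries

variable {A : Type*}

theorem C_dvd_iff_forall_dvd_coeff [CommSemiring A] (a : A) (f : A⟦X⟧) :
    C a ∣ f ↔ ∀ n, a ∣ coeff n f := by
  constructor
  · rintro ⟨g, rfl⟩ n
    rw [coeff_C_mul]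
    exact dvd_mul_right a _
  · intro h
    refine ⟨mk fun n => (h n).choose, ext fun n => ?_⟩
    rw [coeff_C_mul, coeff_mk]
    exact (h n).choose_spec

variable [CommRing A]

theorem eq_zero_of_forall_C_pow_dvd [IsNoetherianRing A] [IsLocalRing A] {ϖ : A}
    (hϖ : ¬IsUnit ϖ) {f : A⟦X⟧} (h : ∀ m, C ϖ ^ m ∣ f) : f = 0 := by
  ext n
  have hkrull := Ideal.iInf_pow_eq_bot_of_isLocalRing (Ideal.span {ϖ})
    (Ideal.span_singleton_ne_top hϖ)
  have hmem : coeff n f ∈ ⨅ m : ℕ, Ideal.span {ϖ} ^ m := by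
    refine Ideal.mem_iInf.2 fun m => ?_
    rw [Ideal.span_singleton_pow, Ideal.mem_span_singleton]
    exact (C_dvd_iff_forall_dvd_coeff _ f).1 (map_pow C ϖ m ▸ h m) n
  simpa [hkrull] using hmem

theorem C_dvd_of_forall_mem_span_C_X_pow {a : A} {f : A⟦X⟧}
    (h : ∀ n, f ∈ Ideal.span {C a, X ^ (n + 1)}) : C a ∣ f := by
  refine (C_dvd_iff_forall_dvd_coeff a f).2 fun n => ?_
  obtain ⟨g, g', rfl⟩ := Ideal.mem_span_pair.1 (h n)
  have hX : coeff n (g' * X ^ (n + 1)) = 0 :=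
    X_pow_dvd_iff.1 (dvd_mul_left (X ^ (n + 1)) g') n n.lt_succ_self
  rw [map_add, hX, add_zero, mul_comm, coeff_C_mul]
  exact dvd_mul_right a _

theorem isUnit_of_notMem_span_C_X [IsLocalRing A] {ϖ : A}
    (hϖ : IsLocalRing.maximalIdeal A = Ideal.span {ϖ}) {f : A⟦X⟧}
    (hf : f ∉ Ideal.span {C ϖ, X}) : IsUnit f := by
  rw [isUnit_iff_constantCoeff]
  by_contra hunit
  have hmem : constantCoeff f ∈ Ideal.span {ϖ} := hϖ ▸ (IsLocalRing.mem_maximalIdeal _).2 hunit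
  obtain ⟨a, ha⟩ := Ideal.mem_span_singleton'.1 hmem
  refine hf (Ideal.mem_span_pair.2 ⟨C a, mk fun n => coeff (n + 1) f, ?_⟩)
  conv_rhs => rw [eq_shift_mul_X_add_const f, ← ha, map_mul]
  ring

theorem map_span_C_X_pow {φ : A⟦X⟧ →+* A⟦X⟧} {ϖ : A} (hφϖ : φ (C ϖ) = C ϖ) {q : ℕ}
    (hφX : φ X = X ^ q) (j : ℕ) :
    (Ideal.span {C ϖ, X ^ j}).map φ = Ideal.span {C ϖ, X ^ (q * j)} := by
  rw [Ideal.map_span, Set.image_pair, hφϖ, map_pow, hφX, ← pow_mul]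

end PowerSeries

namespace Ideal

variable {R : Type*} [CommRing R]

theorem exists_eq_span_singleton_mul_of_le {I : Ideal R} {x : R} (h : I ≤ span {x}) :
    ∃ J : Ideal R, I = span {x} * J := by
  refine ⟨I.colon {x}, le_antisymm (fun z hz => ?_) (span_singleton_mul_le_iff.2 fun z hz => ?_)⟩
  · obtain ⟨y, rfl⟩ := mem_span_singleton'.1 (h hz)
    exact mem_span_singleton_mul.2 ⟨y, Submodule.mem_colon_singleton.2 hz, mul_comm x y⟩
  · rw [mul_comm]
    exact Submodule.mem_colon_singleton.1 hz

theorem le_map_of_span_singleton_mul_le_map [IsDomain R] {σ : R →+* R} {x : R} (hx : x ≠ 0)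
    (hσx : σ x = x) {I : Ideal R} (h : span {x} * I ≤ (span {x} * I).map σ) :
    I ≤ I.map σ := by
  rwa [Ideal.map_mul, map_span, Set.image_singleton, hσx, span_singleton_mul_right_mono hx] at h

end Ideal

section FrobeniusStable

open Ideal

variable {A : Type*} [CommRing A] {ϖ : A} {φ : A⟦X⟧ →+* A⟦X⟧} {q : ℕ}

theorem eq_top_of_le_map_of_not_le_span_C [IsLocalRing A]
    (hϖ : IsLocalRing.maximalIdeal A = span {ϖ}) (hφϖ : φ (C ϖ) = C ϖ) (hq : 1 < q)
    (hφX : φ X = X ^ q) {I : Ideal A⟦X⟧} (hle : I ≤ I.map φ) (hI : ¬I ≤ span {C ϖ}) :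
    I = ⊤ := by
  by_contra htop
  have hX : ∀ j, I ≤ span {C ϖ, X ^ (j + 1)} := by
    intro j
    induction j with
    | zero =>
      intro f hf
      by_contra hmem
      exact htop (eq_top_of_isUnit_mem I hf
        (isUnit_of_notMem_span_C_X hϖ (by simpa using hmem)))
    | succ j ih =>
      have hdvd : X ^ (j + 1 + 1) ∣ (X : A⟦X⟧) ^ (q * (j + 1)) :=
        pow_dvd_pow X (by nlinarith)
      calc I ≤ I.map φ := hle
        _ ≤ (span {C ϖ, X ^ (j + 1)}).map φ := map_mono ih
        _ = span {C ϖ, X ^ (q * (j + 1))} := map_span_C_X_pow hφϖ hφX _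
        _ ≤ span {C ϖ, X ^ (j + 1 + 1)} := by
          refine span_le.2 (Set.insert_subset_iff.2 ⟨subset_span (Set.mem_insert _ _), ?_⟩)
          exact Set.singleton_subset_iff.2
            (mem_of_dvd _ hdvd (subset_span (Set.mem_insert_of_mem _ rfl)))
  exact hI fun f hf => mem_span_singleton.2 (C_dvd_of_forall_mem_span_C_X_pow fun n => hX n hf)

theorem eq_span_C_pow_of_le_map [IsDomain A] [IsDiscreteValuationRing A] (hϖ : Irreducible ϖ)
    (hφϖ : φ (C ϖ) = C ϖ) (hq : 1 < q) (hφX : φ X = X ^ q) {I : Ideal A⟦X⟧} (hI : I ≠ ⊥)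
    (hle : I ≤ I.map φ) : ∃ n, I = span {C ϖ ^ n} := by
  obtain ⟨m, hm⟩ : ∃ m, ¬I ≤ span {C ϖ ^ m} := by
    obtain ⟨f, hf, hf0⟩ := Submodule.exists_mem_ne_zero_of_ne_bot hI
    by_contra! h
    exact hf0 (eq_zero_of_forall_C_pow_dvd hϖ.not_isUnit fun m => mem_span_singleton.1 (h m hf))
  induction m generalizing I with
  | zero => simp at hm
  | succ m ih =>
    by_cases hϖI : I ≤ span {C ϖ}
    · have hCϖ : (C ϖ : A⟦X⟧) ≠ 0 := (C_injective.ne_iff' (map_zero C)).2 hϖ.ne_zero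
      obtain ⟨J, rfl⟩ := exists_eq_span_singleton_mul_of_le hϖI
      have hJm : ¬J ≤ span {C ϖ ^ m} := fun hJ => hm <|
        calc span {C ϖ} * J ≤ span {C ϖ} * span {C ϖ ^ m} := mul_mono_right hJ
          _ = span {C ϖ ^ (m + 1)} := by rw [span_singleton_mul_span_singleton, pow_succ']
      obtain ⟨n, rfl⟩ := ih (by rintro rfl; simp at hI)
        (le_map_of_span_singleton_mul_le_map hCϖ hφϖ hle) hJm
      exact ⟨n + 1, by rw [span_singleton_mul_span_singleton, pow_succ']⟩
    · have hmax := (IsDiscreteValuationRing.irreducible_iff_uniformizer ϖ).1 hϖ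
      exact ⟨0, by rw [pow_zero, span_singleton_one,
        eq_top_of_le_map_of_not_le_span_C hmax hφϖ hq hφX hle hϖI]⟩

end FrobeniusStable

theorem LinearMap.range_le_map_range_of_compat_of_height {R N : Type*} [CommRing R] [IsDomain R]
    [AddCommGroup N] [Module R N] (σ : R →+* R) (φN : N →+ N) (β : N →ₗ[R] R) {a : R}
    (ha : a ≠ 0) (u : R) (hheight : ∀ x, a • x ∈ Submodule.span R (Set.range φN))
    (hcompat : ∀ x, β (φN x) = u * a * σ (β x)) :
    LinearMap.range β ≤ Ideal.map σ (LinearMap.range β) := by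
  have hspan : Submodule.span R (Set.range φN) ≤
      Submodule.comap β (Ideal.span {a} * Ideal.map σ (LinearMap.range β)) := by
    refine Submodule.span_le.2 ?_
    rintro _ ⟨w, rfl⟩
    rw [SetLike.mem_coe, Submodule.mem_comap, hcompat]
    refine Ideal.mem_span_singleton_mul.2 ⟨u * σ (β w), ?_, by ring⟩
    exact Ideal.mul_mem_left _ _ (Ideal.mem_map_of_mem σ ⟨w, rfl⟩)
  rw [← Ideal.span_singleton_mul_right_mono ha, Ideal.span_singleton_mul_le_iff]
  rintro _ ⟨x, rfl⟩
  simpa using hspan (hheight x)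

theorem stmt15_general (p : ℕ) [Fact p.Prime] (k : Type) [Field k] [CharP k p] [PerfectRing k p]
    (φ : PowerSeries (WittVector p k) →+* PowerSeries (WittVector p k))
    (hφX : φ (X : PowerSeries (WittVector p k)) = X ^ p)
    (E : Polynomial (WittVector p k)) (hmonic : E.Monic)
    (r : ℕ) (c : (PowerSeries (WittVector p k))ˣ)
    (𝔑 : Type) [AddCommGroup 𝔑] [Module (PowerSeries (WittVector p k)) 𝔑]
    (φN : 𝔑 →+ 𝔑)
    -- `𝔑` has height `≤ r` : `E^r·𝔑 ⊆ 𝔖·φ_𝔑(𝔑)`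
    (hheight : ∀ x : 𝔑, ((↑E : PowerSeries (WittVector p k)) ^ r • x) ∈
      Submodule.span (PowerSeries (WittVector p k)) (Set.range φN))
    (β : 𝔑 →ₗ[PowerSeries (WittVector p k)] PowerSeries (WittVector p k))
    -- compatibility of `β` with the `φ`-structures: `β(φ_𝔑 x) = c·E^r·φ(β x)`
    (hcompat : ∀ x : 𝔑, β (φN x) =
      (c : PowerSeries (WittVector p k)) * (↑E : PowerSeries (WittVector p k)) ^ r * φ (β x))
    (hne : LinearMap.range β ≠ ⊥) :
    (LinearMap.range β : Ideal (PowerSeries (WittVector p k))) ≤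
      Ideal.span (φ '' ((LinearMap.range β : Ideal (PowerSeries (WittVector p k))) :
        Set (PowerSeries (WittVector p k))))
    ∧ ∃ n : ℕ, (LinearMap.range β : Ideal (PowerSeries (WittVector p k))) =
        Ideal.span {(p : PowerSeries (WittVector p k)) ^ n} := by
  have hE : (E : PowerSeries (WittVector p k)) ^ r ≠ 0 :=
    pow_ne_zero r (Polynomial.coe_eq_zero_iff.not.2 hmonic.ne_zero)
  have hstable : LinearMap.range β ≤ Ideal.map φ (LinearMap.range β) :=
    LinearMap.range_le_map_range_of_compat_of_height φ φN β hE c hheight hcompat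
  have hφp : φ (C (p : WittVector p k)) = C (p : WittVector p k) := by
    simp only [map_natCast]
  obtain ⟨n, hn⟩ := eq_span_C_pow_of_le_map (WittVector.irreducible p) hφp
    (Fact.out : p.Prime).one_lt hφX hne hstable
  exact ⟨hstable, n, by rwa [map_natCast] at hn⟩

/-- Let `M = 𝔖·t` be rank-one free over `𝔖 = W[[u]]` (identified with `𝔖`,
`t = 1`) with `φ_M(t) = c·E(u)^r·t`, `c ∈ 𝔖ˣ`, `E` an Eisenstein polynomial, and let
`β : 𝔑 → M` be a `φ`-compatible morphism from a Kisin module `𝔑` of height `≤ r`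
(i.e. `𝔖·φ_𝔑(𝔑) ⊇ E^r 𝔑`), with nonzero image `I·t` for an ideal `I ⊆ 𝔖`. Then
`𝔖·φ(I) ⊇ I`, and hence `I = (p^n)` for some `n ∈ ℕ`. -/
theorem stmt15 (p : ℕ) [Fact p.Prime] (k : Type) [Field k] [CharP k p] [PerfectRing k p]
    (φ : PowerSeries (WittVector p k) →+* PowerSeries (WittVector p k))
    (hφC : ∀ a : WittVector p k, φ (C a) = C (WittVector.frobenius a))
    (hφX : φ (X : PowerSeries (WittVector p k)) = X ^ p)
    (e : ℕ) (he : 1 ≤ e)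
    (E : Polynomial (WittVector p k)) (hmonic : E.Monic) (hdeg : E.natDegree = e)
    (hEis : E.IsEisensteinAt (Ideal.span {(p : WittVector p k)}))
    (r : ℕ) (c : (PowerSeries (WittVector p k))ˣ)
    (𝔑 : Type) [AddCommGroup 𝔑] [Module (PowerSeries (WittVector p k)) 𝔑]
    [Module.Free (PowerSeries (WittVector p k)) 𝔑]
    [Module.Finite (PowerSeries (WittVector p k)) 𝔑]
    (φN : 𝔑 →+ 𝔑)
    (hsem : ∀ (s : PowerSeries (WittVector p k)) (x : 𝔑), φN (s • x) = φ s • φN x)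
    -- `𝔑` has height `≤ r` : `E^r·𝔑 ⊆ 𝔖·φ_𝔑(𝔑)`
    (hheight : ∀ x : 𝔑, ((↑E : PowerSeries (WittVector p k)) ^ r • x) ∈
      Submodule.span (PowerSeries (WittVector p k)) (Set.range φN))
    (β : 𝔑 →ₗ[PowerSeries (WittVector p k)] PowerSeries (WittVector p k))
    -- compatibility of `β` with the `φ`-structures: `β(φ_𝔑 x) = c·E^r·φ(β x)`
    (hcompat : ∀ x : 𝔑, β (φN x) =
      (c : PowerSeries (WittVector p k)) * (↑E : PowerSeries (WittVector p k)) ^ r * φ (β x))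
    (hne : LinearMap.range β ≠ ⊥) :
    (LinearMap.range β : Ideal (PowerSeries (WittVector p k))) ≤
      Ideal.span (φ '' ((LinearMap.range β : Ideal (PowerSeries (WittVector p k))) :
        Set (PowerSeries (WittVector p k))))
    ∧ ∃ n : ℕ, (LinearMap.range β : Ideal (PowerSeries (WittVector p k))) =
        Ideal.span {(p : PowerSeries (WittVector p k)) ^ n} :=
  stmt15_general p k φ hφX E hmonic r c 𝔑 φN hheight β hcompat hne
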